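/- Let h = (1 2)(3 4)⋯(2g−3 2g−2) and v = (2 3)(4 5)⋯(2g−2 2g−1) be permutations of {1,…,2g−1} for g ≥ 2. Then the commutator h⁻¹v⁻¹hv (equivalently [h,v]) is a single cycle of length 2g−1. -/

import Mathlib

/-!
Both `h` and `v` are involutions, so `⁅h, v⁆ = (h * v) ^ 2`. The product `h * v` is the single
`(2g−1)`-cycle `(1 2 4 6 … 2g−2 2g−1 2g−3 … 5 3)`, and since `2g − 1` is odd, the square of
this cycle is again a cycle with the same support.
-/

open scoped commutatorElement

open Equiv Function

namespace Equiv.Perm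

/-- `c` is the cycle `(e 0, e 1, …, e (n - 1))`. -/
structure IsCycleThrough {α : Type*} {n : ℕ} (c : Perm α) (e : ZMod n → α) : Prop where
  injective : Injective e
  apply_eq : ∀ k, c (e k) = e (k + 1)
  apply_of_notMem : ∀ y ∉ Set.range e, c y = y

namespace IsCycleThrough

variable {α : Type*} {n : ℕ} {c : Perm α} {e : ZMod n → α}

theorem pow_apply (hc : c.IsCycleThrough e) (m : ℕ) (k : ZMod n) :
    (c ^ m) (e k) = e (k + m) := by
  induction m with
  | zero => simp
  | succ m ih => rw [pow_succ', mul_apply, ih, hc.apply_eq, Nat.cast_succ, add_assoc]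

theorem setOf_pow_apply_ne (hc : c.IsCycleThrough e) {m : ℕ} (hm : ¬n ∣ m) :
    {y | (c ^ m) y ≠ y} = Set.range e := by
  ext y
  constructor
  · intro hy
    by_contra hy'
    exact hy (pow_apply_eq_self_of_apply_eq_self (hc.apply_of_notMem y hy') m)
  · rintro ⟨k, rfl⟩
    rw [Set.mem_ofPred_eq, hc.pow_apply, Ne, hc.injective.eq_iff]
    simpa using (ZMod.natCast_eq_zero_iff m n).not.mpr hm

theorem isCycle_pow (hc : c.IsCycleThrough e) {m : ℕ} (hmn : m.Coprime n) (hn : 1 < n) :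
    (c ^ m).IsCycle := by
  have : NeZero n := ⟨by omega⟩
  have hmoved := hc.setOf_pow_apply_ne fun hdvd => hn.ne' (hmn.symm.eq_one_of_dvd hdvd)
  refine ⟨e 0, hmoved.ge (Set.mem_range_self 0), fun y hy => ?_⟩
  obtain ⟨k, rfl⟩ := hmoved.le hy
  -- `k = m * (k * m⁻¹)` in `ZMod n`
  refine ⟨((k * ↑(ZMod.unitOfCoprime m hmn)⁻¹).val : ℕ), ?_⟩
  rw [zpow_natCast, ← pow_mul, hc.pow_apply, Nat.cast_mul, ZMod.natCast_zmod_val, zero_add,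
    ← ZMod.coe_unitOfCoprime m hmn, mul_left_comm, Units.mul_inv, mul_one]

end IsCycleThrough

end Equiv.Perm

theorem commutatorElement_eq_sq_of_inv_eq_self {G : Type*} [Group G] {a b : G} (ha : a⁻¹ = a)
    (hb : b⁻¹ = b) : ⁅a, b⁆ = (a * b) ^ 2 := by
  rw [commutatorElement_def, ha, hb, sq, ← mul_assoc]

theorem ZMod.val_add_one_eq {n : ℕ} (hn : 1 < n) (k : ZMod n) :
    (k + 1).val = if k.val + 1 = n then 0 else k.val + 1 := by
  have : NeZero n := ⟨by omega⟩
  rw [ZMod.val_add, ZMod.val_one_eq_one_mod, Nat.mod_eq_of_lt hn]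
  split_ifs with h
  · rw [h, Nat.mod_self]
  · exact Nat.mod_eq_of_lt (by have := k.val_lt; omega)

def pairSwaps (b m : ℕ) : Perm ℕ :=
  ((List.range m).map fun i => swap (2 * i + b) (2 * i + b + 1)).prod

theorem pairSwaps_apply (b m x : ℕ) :
    pairSwaps b m x =
      if b ≤ x ∧ x < b + 2 * m then (if x % 2 = b % 2 then x + 1 else x - 1) else x := by
  induction m generalizing x with
  | zero =>
    simp only [pairSwaps, List.range_zero, List.map_nil, List.prod_nil, Perm.one_apply]
    split_ifs <;> omega
  | succ m ih =>
    rw [pairSwaps, List.range_succ, List.map_append, List.prod_append, List.map_singleton,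
      List.prod_singleton, Perm.mul_apply, swap_apply_def, ← pairSwaps, ih]
    split_ifs <;> omega

theorem pairSwaps_inv (b m : ℕ) : (pairSwaps b m)⁻¹ = pairSwaps b m := by
  refine inv_eq_of_mul_eq_one_right (Perm.ext fun x => ?_)
  rw [Perm.mul_apply, pairSwaps_apply, pairSwaps_apply, Perm.one_apply]
  split_ifs <;> omega

/-- The orbit `1, 2, 4, …, 2g − 2, 2g − 1, 2g − 3, …, 3` of `1` under `h * v`. -/
def hyperellipticOrbit (g : ℕ) (k : ZMod (2 * g - 1)) : ℕ :=
  if k.val = 0 then 1 else if k.val < g then 2 * k.val else 4 * g - 1 - 2 * k.val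

theorem range_hyperellipticOrbit {g : ℕ} (hg : 1 ≤ g) :
    Set.range (hyperellipticOrbit g) = Set.Icc 1 (2 * g - 1) := by
  have : NeZero (2 * g - 1) := ⟨by omega⟩
  ext y
  constructor
  · rintro ⟨k, rfl⟩
    have := k.val_lt
    rw [hyperellipticOrbit, Set.mem_Icc]
    split_ifs <;> omega
  · rintro ⟨h1, h2⟩
    refine ⟨((if y = 1 then 0 else if y % 2 = 0 then y / 2 else 2 * g - 1 - y / 2 : ℕ) :
      ZMod (2 * g - 1)), ?_⟩
    rw [hyperellipticOrbit, ZMod.val_cast_of_lt (by split_ifs <;> omega)]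
    split_ifs <;> omega

theorem isCycleThrough_hyperellipticOrbit {g : ℕ} (hg : 2 ≤ g) :
    (pairSwaps 1 (g - 1) * pairSwaps 2 (g - 1)).IsCycleThrough (hyperellipticOrbit g) := by
  have : NeZero (2 * g - 1) := ⟨by omega⟩
  refine ⟨fun k l hkl => ?_, fun k => ?_, fun y hy => ?_⟩
  · have := k.val_lt
    have := l.val_lt
    apply ZMod.val_injective
    unfold hyperellipticOrbit at hkl
    split_ifs at hkl <;> omega
  · have := k.val_lt
    rw [Perm.mul_apply, pairSwaps_apply, pairSwaps_apply, hyperellipticOrbit, hyperellipticOrbit,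
      ZMod.val_add_one_eq (by omega)]
    split_ifs <;> first | contradiction | omega
  · rw [range_hyperellipticOrbit (by omega), Set.mem_Icc] at hy
    rw [Perm.mul_apply, pairSwaps_apply, pairSwaps_apply]
    split_ifs <;> omega

/-- For `g ≥ 2`, with `h = (1 2)(3 4)⋯(2g−3 2g−2)` and
`v = (2 3)(4 5)⋯(2g−2 2g−1)` in the symmetric group on `{1,…,2g−1}` (viewed as
permutations of `ℕ` supported there), the commutator `[h, v]` is a single cycle
of length `2g−1`, i.e. it is a cycle whose set of moved points is exactly
`{1, …, 2g−1}`. -/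
theorem commutator_of_hyperelliptic_perms_isCycle (g : ℕ) (hg : 2 ≤ g)
    (h v : Equiv.Perm ℕ)
    (hh : h = ((List.range (g - 1)).map (fun i => Equiv.swap (2 * i + 1) (2 * i + 2))).prod)
    (hv : v = ((List.range (g - 1)).map (fun i => Equiv.swap (2 * i + 2) (2 * i + 3))).prod) :
    (⁅h, v⁆).IsCycle ∧ {x : ℕ | ⁅h, v⁆ x ≠ x} = Set.Icc 1 (2 * g - 1) := by
  have hh : h = pairSwaps 1 (g - 1) := hh
  have hv : v = pairSwaps 2 (g - 1) := hv
  have hsq : ⁅h, v⁆ = (pairSwaps 1 (g - 1) * pairSwaps 2 (g - 1)) ^ 2 := by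
    rw [hh, hv]
    exact commutatorElement_eq_sq_of_inv_eq_self (pairSwaps_inv 1 _) (pairSwaps_inv 2 _)
  have hc := isCycleThrough_hyperellipticOrbit hg
  rw [hsq, ← range_hyperellipticOrbit (by omega)]
  exact ⟨hc.isCycle_pow (Nat.coprime_two_left.mpr ⟨g - 1, by omega⟩) (by omega),
    hc.setOf_pow_apply_ne (Nat.not_dvd_of_pos_of_lt two_pos (by omega))⟩
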